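/- arXiv:2007.12538 — 3 statements merged into one kernel-verified Lean document; each statement's English description precedes it below -/
import Mathlib

section
/- Let G be a finite abelian group with character group A, and let 𝓑ₙ(G) be the ℤ-module generated by symbols [a₁,…,aₙ] of n-tuples of elements of A (up to order) that generate A, subject to the relations: for all 2 ≤ j ≤ n, [a₁,…,aₙ] = ∑_{1≤i≤j, a_i ≠ a_{i'} ∀ i'<i} [a₁−a_i,…,a_i,…,a_j−a_i,a_{j+1},…,aₙ]. Then for n ≥ 2, the relations with j > 2 are consequences of the relations with j = 2; that is, 𝓑ₙ(G) is presented by the generators and only the j = 2 relations. -/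
/-!
Induction on `j`. By the symmetry of `s`, the `j = 2` relation holds at any pair of slots; at
the slots `(i, j)` it splits the `i`-th term of the relation for `j` into the `i`-th term of the
relation for `j + 1` plus, when `a j ≠ a i`, the `i`-th term of the relation for `j` applied to
the `j`-th term `e` of the relation for `j + 1`. These extra terms sum to `s e` when `a j` is a
new value, supplying the missing term, and to `s e - s e = 0` otherwise, since `e` vanishes at
the first occurrence of `a j`.
-/

open Finset Function

lemma Equiv.Perm.exists_apply_eq_and_apply_eq {α : Type*} [DecidableEq α] {x y p q : α}
    (hxy : x ≠ y) (hpq : p ≠ q) : ∃ σ : Equiv.Perm α, σ x = p ∧ σ y = q := by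
  have hx : x ≠ Equiv.swap x p q := fun h => hpq <| by
    simpa using congrArg (Equiv.swap x p) h
  exact ⟨(Equiv.swap y (Equiv.swap x p q)).trans (Equiv.swap x p),
    by simp [Equiv.swap_apply_of_ne_of_ne hxy hx], by simp⟩

namespace KPT

variable {A : Type*} {n : ℕ}

section blowup

variable [AddCommGroup A]

-- The tuple `[a₁ - aᵢ, …, aᵢ, …, a_k - aᵢ, a_{k+1}, …, aₙ]` of the `i`-th term of the relation
-- for `j = k`.
def blowup (k : ℕ) (a : Fin n → A) (i : Fin n) : Fin n → A :=
  fun m => if m = i then a i else if m.val < k then a m - a i else a m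

variable (k : ℕ) (a : Fin n → A)

@[simp]
lemma blowup_apply_self (i : Fin n) : blowup k a i i = a i := by
  simp [blowup]

lemma blowup_apply_of_lt {i m : Fin n} (hmi : m ≠ i) (hm : m.val < k) :
    blowup k a i m = a m - a i := by
  simp [blowup, hmi, hm]

lemma blowup_apply_of_le {i m : Fin n} (hmi : m ≠ i) (hm : k ≤ m.val) :
    blowup k a i m = a m := by
  simp [blowup, hmi, Nat.not_lt.mpr hm]

lemma closure_range_blowup (i : Fin n) :
    AddSubgroup.closure (Set.range (blowup k a i)) = AddSubgroup.closure (Set.range a) := by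
  have mem : ∀ m, a m ∈ AddSubgroup.closure (Set.range a) :=
    fun m => AddSubgroup.subset_closure ⟨m, rfl⟩
  have mem' : ∀ m, blowup k a i m ∈ AddSubgroup.closure (Set.range (blowup k a i)) :=
    fun m => AddSubgroup.subset_closure ⟨m, rfl⟩
  apply le_antisymm <;> rw [AddSubgroup.closure_le] <;> rintro _ ⟨m, rfl⟩
  · unfold blowup
    split_ifs
    exacts [mem i, sub_mem (mem m) (mem i), mem m]
  · rcases eq_or_ne m i with rfl | hmi
    · simpa using mem' m
    by_cases hm : m.val < k
    · simpa [blowup_apply_of_lt k a hmi hm] using add_mem (mem' m) (mem' i)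
    · simpa [blowup_apply_of_le k a hmi (Nat.le_of_not_lt hm)] using mem' m

lemma blowup_two_eq_update {p q : Fin n} (hp : p.val < 2) (hq : q.val < 2) (hpq : p ≠ q) :
    blowup 2 a p = update a q (a q - a p) := by
  funext m
  rcases eq_or_ne m p with rfl | hmp
  · simp [hpq]
  rcases eq_or_ne m q with rfl | hmq
  · simp [blowup_apply_of_lt 2 a hmp hq]
  · rw [update_of_ne hmq, blowup_apply_of_le 2 a hmp (by omega)]

lemma update_blowup_eq_blowup_succ {i J : Fin n} (hJ : J.val = k) (hiJ : i ≠ J) :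
    update (blowup k a i) J (a J - a i) = blowup (k + 1) a i := by
  funext m
  rcases eq_or_ne m J with rfl | hmJ
  · rw [update_self, blowup_apply_of_lt _ a hiJ.symm (by omega)]
  rw [update_of_ne hmJ]
  rcases eq_or_ne m i with rfl | hmi
  · simp
  have hmk : m.val ≠ k := fun h => hmJ (Fin.ext (h.trans hJ.symm))
  by_cases hm : m.val < k
  · rw [blowup_apply_of_lt k a hmi hm, blowup_apply_of_lt _ a hmi (by omega)]
  · rw [blowup_apply_of_le k a hmi (by omega), blowup_apply_of_le _ a hmi (by omega)]

lemma update_blowup_eq_blowup_blowup {i J : Fin n} (hJ : J.val = k) (hi : i.val < k) :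
    update (blowup k a i) i (a i - a J) = blowup k (blowup (k + 1) a J) i := by
  have ne_J : ∀ m : Fin n, m.val < k → m ≠ J := fun m hm h => by omega
  have hJi : blowup (k + 1) a J i = a i - a J := blowup_apply_of_lt _ a (ne_J i hi) (by omega)
  funext m
  rcases eq_or_ne m i with rfl | hmi
  · simp [hJi]
  rw [update_of_ne hmi]
  by_cases hm : m.val < k
  · rw [blowup_apply_of_lt k a hmi hm, blowup_apply_of_lt k _ hmi hm, hJi,
      blowup_apply_of_lt _ a (ne_J m hm) (by omega), sub_sub_sub_cancel_right]
  rw [blowup_apply_of_le k a hmi (by omega), blowup_apply_of_le k _ hmi (by omega)]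
  rcases eq_or_ne m J with rfl | hmJ
  · simp
  · rw [blowup_apply_of_le _ a hmJ (by omega)]

lemma blowup_eq_self_of_apply_eq_zero {i : Fin n} (h : a i = 0) : blowup k a i = a := by
  funext m
  unfold blowup
  split_ifs with hmi <;> simp [hmi, h]

end blowup

section firstOccurrences

variable [DecidableEq A] (k : ℕ) (a : Fin n → A)

def firstOccurrences : Finset (Fin n) :=
  univ.filter fun i => i.val < k ∧ ∀ i' : Fin n, i'.val < i.val → a i' ≠ a i

variable {k a}

lemma mem_firstOccurrences {i : Fin n} :
    i ∈ firstOccurrences k a ↔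
      i.val < k ∧ ∀ i' : Fin n, i'.val < i.val → a i' ≠ a i := by
  simp [firstOccurrences]

lemma firstOccurrences_two {z o : Fin n} (hz : z.val = 0) (ho : o.val = 1) :
    firstOccurrences 2 a = if a o = a z then {z} else {z, o} := by
  have lt_two : ∀ i : Fin n, i.val < 2 ↔ i = z ∨ i = o := fun i => by
    simp only [Fin.ext_iff]; omega
  have not_lt_z : ∀ i : Fin n, ¬ i.val < z.val := fun i => by omega
  have lt_o : ∀ i : Fin n, i.val < o.val ↔ i = z := fun i => by
    simp only [Fin.ext_iff]; omega
  have z_mem : z ∈ firstOccurrences 2 a :=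
    mem_firstOccurrences.mpr ⟨by omega, fun i' hi' => absurd hi' (not_lt_z i')⟩
  have o_mem_iff : o ∈ firstOccurrences 2 a ↔ a o ≠ a z := by
    rw [mem_firstOccurrences]
    exact ⟨fun h => (h.2 z ((lt_o z).mpr rfl)).symm,
      fun h => ⟨by omega, fun i' hi' => (lt_o i').mp hi' ▸ h.symm⟩⟩
  ext i
  by_cases hi : i.val < 2
  · rcases (lt_two i).mp hi with rfl | rfl
    · split_ifs <;> simp [z_mem]
    · have hzo : i ≠ z := fun h => by rw [h] at ho; omega
      split_ifs with h <;> simp [o_mem_iff, h, hzo]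
  · have : i ∉ firstOccurrences 2 a := fun h => hi (mem_firstOccurrences.mp h).1
    have : i ≠ z ∧ i ≠ o := by rw [lt_two] at hi; tauto
    split_ifs <;> simp_all

lemma mem_firstOccurrences_succ {i : Fin n} :
    i ∈ firstOccurrences (k + 1) a ↔
      i ∈ firstOccurrences k a ∨ i.val = k ∧ ∀ i' : Fin n, i'.val < k → a i' ≠ a i := by
  simp only [mem_firstOccurrences]
  constructor
  · rintro ⟨hi, h⟩
    rcases Nat.lt_succ_iff_lt_or_eq.mp hi with hi | hi
    · exact .inl ⟨hi, h⟩
    · exact .inr ⟨hi, hi ▸ h⟩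
  · rintro (⟨hi, h⟩ | ⟨hi, h⟩)
    · exact ⟨by omega, h⟩
    · exact ⟨by omega, hi ▸ h⟩

lemma firstOccurrences_succ_of_forall_ne {J : Fin n} (hJ : J.val = k)
    (h : ∀ i : Fin n, i.val < k → a i ≠ a J) :
    firstOccurrences (k + 1) a = insert J (firstOccurrences k a) := by
  ext i
  rw [mem_firstOccurrences_succ, mem_insert, or_comm]
  refine or_congr_left ⟨fun hi => Fin.ext (hi.1.trans hJ.symm), ?_⟩
  rintro rfl
  exact ⟨hJ, h⟩

lemma firstOccurrences_succ_of_exists_eq {J : Fin n} (hJ : J.val = k)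
    (h : ∃ i : Fin n, i.val < k ∧ a i = a J) :
    firstOccurrences (k + 1) a = firstOccurrences k a := by
  ext i
  rw [mem_firstOccurrences_succ, or_iff_left_iff_imp]
  rintro ⟨hi, hne⟩
  obtain ⟨i', hi', heq⟩ := h
  exact absurd (heq.trans (congrArg a (Fin.ext (hJ.trans hi.symm)))) (hne i' hi')

lemma exists_mem_firstOccurrences_apply_eq {i : Fin n} (hi : i.val < k) :
    ∃ i₀ ∈ firstOccurrences k a, a i₀ = a i := by
  induction i using WellFoundedLT.induction with
  | _ i ih =>
  by_cases h : ∀ i' : Fin n, i'.val < i.val → a i' ≠ a i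
  · exact ⟨i, mem_firstOccurrences.mpr ⟨hi, h⟩, rfl⟩
  push Not at h
  obtain ⟨i', hi', heq⟩ := h
  obtain ⟨i₀, hmem, h₀⟩ := ih i' hi' (by omega)
  exact ⟨i₀, hmem, h₀.trans heq⟩

lemma eq_of_mem_firstOccurrences {i i' : Fin n} (hi : i ∈ firstOccurrences k a)
    (hi' : i' ∈ firstOccurrences k a) (h : a i = a i') : i = i' := by
  rw [mem_firstOccurrences] at hi hi'
  rcases lt_trichotomy i.val i'.val with hlt | heq | hgt
  · exact absurd h (hi'.2 i hlt)
  · exact Fin.ext heq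
  · exact absurd h.symm (hi.2 i' hgt)

lemma firstOccurrences_blowup [AddCommGroup A] {l : ℕ} {J : Fin n} (hJ : k ≤ J.val)
    (hl : k ≤ l) : firstOccurrences k (blowup l a J) = firstOccurrences k a := by
  have h : ∀ m : Fin n, m.val < k → blowup l a J m = a m - a J := fun m hm =>
    blowup_apply_of_lt l a (by rintro rfl; omega) (by omega)
  ext i
  simp only [mem_firstOccurrences]
  refine and_congr_right fun hi => forall_congr' fun i' => imp_congr_right fun hi' => ?_
  rw [h i hi, h i' (by omega), ne_eq, sub_left_inj]

end firstOccurrences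

section relations

variable [AddCommGroup A] [DecidableEq A] {M : Type*} [AddCommGroup M]
  (s : (Fin n → A) → M)

def SatisfiesRelation (k : ℕ) : Prop :=
  ∀ a : Fin n → A, AddSubgroup.closure (Set.range a) = ⊤ →
    s a = ∑ i ∈ firstOccurrences k a, s (blowup k a i)

-- The `j = 2` relation, with the first two slots replaced by an arbitrary pair `p ≠ q`.
def SatisfiesExchange : Prop :=
  ∀ p q : Fin n, p ≠ q → ∀ a : Fin n → A, AddSubgroup.closure (Set.range a) = ⊤ →
    s a = s (update a q (a q - a p)) + if a q = a p then 0 else s (update a p (a p - a q))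

lemma sum_firstOccurrences_two (a : Fin n → A) {z o : Fin n} (hz : z.val = 0)
    (ho : o.val = 1) :
    ∑ i ∈ firstOccurrences 2 a, s (blowup 2 a i) =
      s (update a o (a o - a z)) + if a o = a z then 0 else s (update a z (a z - a o)) := by
  have hzo : z ≠ o := fun h => by rw [h] at hz; omega
  have hz2 : z.val < 2 := by omega
  have ho2 : o.val < 2 := by omega
  rw [firstOccurrences_two hz ho]
  split_ifs
  · rw [sum_singleton, add_zero, blowup_two_eq_update a hz2 ho2 hzo]
  · rw [sum_pair hzo, blowup_two_eq_update a hz2 ho2 hzo,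
      blowup_two_eq_update a ho2 hz2 hzo.symm]

variable {s}

lemma satisfiesExchange_of_satisfiesRelation_two
    (hsym : ∀ (a : Fin n → A) (σ : Equiv.Perm (Fin n)), s (a ∘ σ) = s a)
    (h2 : SatisfiesRelation s 2) : SatisfiesExchange s := by
  intro p q hpq a ha
  have hn : 2 ≤ n := by
    have := Fin.val_ne_of_ne hpq
    omega
  let z : Fin n := ⟨0, by omega⟩
  let o : Fin n := ⟨1, by omega⟩
  obtain ⟨σ, hσz, hσo⟩ :=
    Equiv.Perm.exists_apply_eq_and_apply_eq (x := z) (y := o) (by simp [z, o, Fin.ext_iff]) hpq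
  have update_comp : ∀ x v, update (a ∘ σ) x v = update a (σ x) v ∘ σ := fun x v => by
    rw [update_comp_equiv, Equiv.symm_apply_apply]
  have hσ := h2 (a ∘ σ) (by rwa [σ.surjective.range_comp])
  rwa [sum_firstOccurrences_two s _ (z := z) (o := o) rfl rfl, update_comp, update_comp, hsym,
    hsym, hsym, comp_apply, comp_apply, hσz, hσo] at hσ

lemma SatisfiesExchange.apply_blowup (hex : SatisfiesExchange s) {k : ℕ} {a : Fin n → A}
    (ha : AddSubgroup.closure (Set.range a) = ⊤) {i J : Fin n} (hJ : J.val = k)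
    (hi : i.val < k) :
    s (blowup k a i) = s (blowup (k + 1) a i) +
      if a J = a i then 0 else s (blowup k (blowup (k + 1) a J) i) := by
  have hiJ : i ≠ J := by rintro rfl; omega
  have h := hex i J hiJ (blowup k a i) (by rwa [closure_range_blowup])
  rwa [blowup_apply_self, blowup_apply_of_le k a hiJ.symm hJ.ge,
    update_blowup_eq_blowup_succ k a hJ hiJ, update_blowup_eq_blowup_blowup k a hJ hi] at h

lemma SatisfiesRelation.apply_blowup_succ {k : ℕ} (hk : SatisfiesRelation s k)
    {a : Fin n → A} (ha : AddSubgroup.closure (Set.range a) = ⊤) {J : Fin n} (hJ : J.val = k) :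
    s (blowup (k + 1) a J) =
      ∑ i ∈ firstOccurrences k a, s (blowup k (blowup (k + 1) a J) i) := by
  rw [hk _ (by rwa [closure_range_blowup]), firstOccurrences_blowup hJ.ge (by omega)]

lemma SatisfiesRelation.sum_exchange_of_exists_eq {k : ℕ} (hk : SatisfiesRelation s k)
    {a : Fin n → A} (ha : AddSubgroup.closure (Set.range a) = ⊤) {J : Fin n} (hJ : J.val = k)
    (h : ∃ i : Fin n, i.val < k ∧ a i = a J) :
    ∑ i ∈ firstOccurrences k a,
      (if a J = a i then 0 else s (blowup k (blowup (k + 1) a J) i)) = 0 := by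
  obtain ⟨i', hi', heq⟩ := h
  obtain ⟨i₀, hi₀, h₀⟩ := exists_mem_firstOccurrences_apply_eq (a := a) hi'
  have hi₀k := (mem_firstOccurrences.mp hi₀).1
  -- `e := blowup (k + 1) a J` is its own `i₀`-th term, since `e i₀ = a i₀ - a J = 0`
  have he_self : blowup k (blowup (k + 1) a J) i₀ = blowup (k + 1) a J :=
    blowup_eq_self_of_apply_eq_zero k _ <| by
      rw [blowup_apply_of_lt _ a (by rintro rfl; omega) (by omega), h₀, heq, sub_self]
  rw [← add_sum_erase _ _ hi₀, if_pos (h₀.trans heq).symm, zero_add,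
    sum_congr rfl fun i hi => if_neg fun hJi => (mem_erase.mp hi).1 <|
      eq_of_mem_firstOccurrences (mem_erase.mp hi).2 hi₀ (hJi.symm.trans (h₀.trans heq).symm),
    sum_erase_eq_sub hi₀, ← hk.apply_blowup_succ ha hJ, he_self, sub_self]

lemma SatisfiesRelation.succ (hex : SatisfiesExchange s) {k : ℕ} (hk : SatisfiesRelation s k)
    (hkn : k < n) : SatisfiesRelation s (k + 1) := by
  intro a ha
  let J : Fin n := ⟨k, hkn⟩
  have hJ : J.val = k := rfl
  have hsplit : s a = ∑ i ∈ firstOccurrences k a, s (blowup (k + 1) a i) +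
      ∑ i ∈ firstOccurrences k a,
        (if a J = a i then 0 else s (blowup k (blowup (k + 1) a J) i)) := by
    rw [← sum_add_distrib, hk a ha]
    exact sum_congr rfl fun i hi => hex.apply_blowup ha hJ (mem_firstOccurrences.mp hi).1
  by_cases hnew : ∀ i : Fin n, i.val < k → a i ≠ a J
  · have hJ_notMem : J ∉ firstOccurrences k a := fun h => (mem_firstOccurrences.mp h).1.ne hJ
    rw [firstOccurrences_succ_of_forall_ne hJ hnew, sum_insert hJ_notMem, hsplit, add_comm,
      sum_congr rfl fun i hi => if_neg (hnew i (mem_firstOccurrences.mp hi).1).symm,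
      hk.apply_blowup_succ ha hJ]
  · push Not at hnew
    rw [firstOccurrences_succ_of_exists_eq hJ hnew, hsplit,
      hk.sum_exchange_of_exists_eq ha hJ hnew, add_zero]

end relations

end KPT

theorem BnG_presented_by_j_eq_two_relations_general
    {A : Type*} [AddCommGroup A] [DecidableEq A]
    {M : Type*} [AddCommGroup M] (n : ℕ)
    (s : (Fin n → A) → M)
    (hsym : ∀ (a : Fin n → A) (σ : Equiv.Perm (Fin n)), s (a ∘ σ) = s a)
    (hrel2 : ∀ a : Fin n → A, AddSubgroup.closure (Set.range a) = ⊤ →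
      s a = ∑ i ∈ Finset.univ.filter
          (fun i : Fin n => i.val < 2 ∧ ∀ i' : Fin n, i'.val < i.val → a i' ≠ a i),
        s (fun m => if m = i then a i else if m.val < 2 then a m - a i else a m)) :
    ∀ j : ℕ, 2 ≤ j → j ≤ n →
      ∀ a : Fin n → A, AddSubgroup.closure (Set.range a) = ⊤ →
      s a = ∑ i ∈ Finset.univ.filter
          (fun i : Fin n => i.val < j ∧ ∀ i' : Fin n, i'.val < i.val → a i' ≠ a i),
        s (fun m => if m = i then a i else if m.val < j then a m - a i else a m) := by
  have hex := KPT.satisfiesExchange_of_satisfiesRelation_two hsym hrel2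
  intro j hj
  induction j, hj using Nat.le_induction with
  | base => exact fun _ => hrel2
  | succ j _ ih => exact fun hjn => KPT.SatisfiesRelation.succ hex (ih (by omega)) hjn

/-- Presentation of the group `𝓑ₙ(G)` of Kontsevich–Pestun–Tschinkel by the `j = 2` relations
only: if `s` is any assignment of elements of an abelian group `M` to unordered `n`-tuples of
elements of the (finite abelian) character group `A` that generate `A`, and `s` satisfies the
defining relation of `𝓑ₙ(G)` for `j = 2`, then `s` satisfies the relation for every
`2 ≤ j ≤ n`.  (In the relation, the `i`-th slot carries `a i`, slots `m < j` with `m ≠ i`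
carry `a m - a i`, and slots `m ≥ j` are unchanged; the sum runs over those `i < j` such that
`a i` differs from all earlier `a i'`, `i' < i`.) -/
theorem BnG_presented_by_j_eq_two_relations
    {A : Type*} [AddCommGroup A] [Finite A] [DecidableEq A]
    {M : Type*} [AddCommGroup M] (n : ℕ) (hn : 2 ≤ n)
    (s : (Fin n → A) → M)
    (hsym : ∀ (a : Fin n → A) (σ : Equiv.Perm (Fin n)), s (a ∘ σ) = s a)
    (hrel2 : ∀ a : Fin n → A, AddSubgroup.closure (Set.range a) = ⊤ →
      s a = ∑ i ∈ Finset.univ.filter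
          (fun i : Fin n => i.val < 2 ∧ ∀ i' : Fin n, i'.val < i.val → a i' ≠ a i),
        s (fun m => if m = i then a i else if m.val < 2 then a m - a i else a m)) :
    ∀ j : ℕ, 2 ≤ j → j ≤ n →
      ∀ a : Fin n → A, AddSubgroup.closure (Set.range a) = ⊤ →
      s a = ∑ i ∈ Finset.univ.filter
          (fun i : Fin n => i.val < j ∧ ∀ i' : Fin n, i'.val < i.val → a i' ≠ a i),
        s (fun m => if m = i then a i else if m.val < j then a m - a i else a m) :=
  BnG_presented_by_j_eq_two_relations_general n s hsym hrel2
end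

section
/- Let G = D₈ be the dihedral group of order 8, generated by ρ of order 4 and σ of order 2 with σρσ = ρ^{-1}, and let H = ⟨ρ⟩ ≅ ℤ/4ℤ. Let G act on K = ℂ(z) through the quotient G/H ≅ ℤ/2ℤ, with the nontrivial element acting by z ↦ −z. Then the restriction map H¹(G, K^×) → H¹(H, K^×)^{G/H} = Hom(H, ℂ^×) is not surjective; in fact |H¹(G, K^×)| = 2 while Hom(H, ℂ^×) ≅ ℤ/4ℤ. -/
/-!
On `H = ⟨ρ⟩`, which acts trivially, a cocycle `f` is a character, so `a = f ρ` satisfies `a⁴ = 1`,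
and `σρ = ρ⁻¹σ` gives `σ a = a³`. Fourth roots of unity in `ℂ(z)` are constants, hence fixed by
`σ`, so `a = ±1` and the characters of `H` with `ρ ↦ ±i` do not extend to `G`. Conversely, two
cocycles with the same `a` differ on `σ` by some `u` with `u σ(u) = 1`, which is `σ(β)/β` by
Hilbert 90 for `ℂ(z)/ℂ(z²)`; so the class of `f` is determined by `a ∈ {1, -1}`, and both values
occur (the trivial cocycle and the sign character of `D₈`).
-/

noncomputable section

/-- The action of `g ∈ D₈` on `ℂ(z)`, given an action `φ` by `ℂ`-algebra automorphisms. -/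
def D8act (φ : DihedralGroup 4 →* (RatFunc ℂ ≃ₐ[ℂ] RatFunc ℂ))
    (g : DihedralGroup 4) (x : RatFunc ℂ) : RatFunc ℂ :=
  φ g x

/-- A 1-cocycle on `G = D₈` with values in `ℂ(z)ˣ`. -/
def D8IsCocycle (φ : DihedralGroup 4 →* (RatFunc ℂ ≃ₐ[ℂ] RatFunc ℂ))
    (f : DihedralGroup 4 → (RatFunc ℂ)ˣ) : Prop :=
  ∀ g h : DihedralGroup 4, ((f (g * h) : RatFunc ℂ)) = (f g : RatFunc ℂ) * D8act φ g (f h)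

/-- Two cocycles are cohomologous when they differ by a coboundary. -/
def D8Cohomologous (φ : DihedralGroup 4 →* (RatFunc ℂ ≃ₐ[ℂ] RatFunc ℂ))
    (f f' : {f : DihedralGroup 4 → (RatFunc ℂ)ˣ // D8IsCocycle φ f}) : Prop :=
  ∃ β : (RatFunc ℂ)ˣ, ∀ g : DihedralGroup 4,
    ((f.1 g : RatFunc ℂ)) = (f'.1 g : RatFunc ℂ) * (D8act φ g β * (↑β⁻¹ : RatFunc ℂ))

open DihedralGroup Subgroup

lemma exists_ne_zero_apply_eq_mul_of_involutive {R K : Type*} [CommSemiring R] [Field K]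
    [Algebra R K] (τ : K ≃ₐ[R] K) (hτ : Function.Involutive τ) {x : K} (hx : τ x ≠ x)
    {u : K} (hu : u * τ u = 1) : ∃ β : K, β ≠ 0 ∧ τ β = u * β := by
  have hu0 : u ≠ 0 := left_ne_zero_of_mul_eq_one hu
  have hτu : τ u⁻¹ = u := by rw [map_inv₀, inv_eq_of_mul_eq_one_left hu]
  have key : ∀ c : K, τ (τ c + u⁻¹ * c) = u * (τ c + u⁻¹ * c) := by
    intro c
    rw [map_add, map_mul, hτ c, hτu]
    field_simp
    ring
  by_cases h1 : τ 1 + u⁻¹ * 1 = 0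
  · refine ⟨τ x + u⁻¹ * x, ?_, key x⟩
    rw [map_one, mul_one] at h1
    rw [eq_neg_of_add_eq_zero_right h1, neg_one_mul, ← sub_eq_add_neg]
    exact sub_ne_zero.mpr hx
  · exact ⟨_, h1, key 1⟩

lemma eq_one_or_eq_neg_one_of_pow_four_eq_one {F K : Type*} [CommRing F] [CommRing K]
    [IsDomain K] [Algebra F K] [NeZero (2 : K)] (σ : K →ₐ[F] K) {i : F} (hi : i ^ 2 = -1)
    {a : K} (ha : a ^ 4 = 1) (hσa : σ a = a ^ 3) : a = 1 ∨ a = -1 := by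
  set j := algebraMap F K i
  have hj : j ^ 2 = -1 := by rw [← map_pow, hi, map_neg, map_one]
  have hfac : (a - 1) * (a + 1) * ((a - j) * (a + j)) = 0 := by
    linear_combination ha + (1 - a ^ 2) * hj
  rcases mul_eq_zero.mp hfac with h | h
  · rcases mul_eq_zero.mp h with h | h
    · exact .inl (sub_eq_zero.mp h)
    · exact .inr (eq_neg_of_add_eq_zero_left h)
  · exfalso
    have ha_const : σ a = a ∧ a ^ 2 = -1 := by
      rcases mul_eq_zero.mp h with h | h
      · rw [sub_eq_zero.mp h, AlgHom.commutes]; exact ⟨rfl, hj⟩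
      · rw [eq_neg_of_add_eq_zero_left h, map_neg, AlgHom.commutes, neg_sq]; exact ⟨rfl, hj⟩
    have h2a : 2 * a = 0 := by linear_combination hσa - ha_const.1 + a * ha_const.2
    have ha0 : a = 0 := (mul_eq_zero.mp h2a).resolve_left two_ne_zero
    simp [ha0] at ha

lemma exists_monoidHom_zpowers_apply_eq {G G' : Type*} [Group G] [Group G'] (g : G) {g' : G'}
    (h : orderOf g' ∣ orderOf g) :
    ∃ χ : zpowers g →* G', χ ⟨g, mem_zpowers g⟩ = g' := by
  have hgen : ∀ x : zpowers g, x ∈ zpowers ⟨g, mem_zpowers g⟩ := by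
    intro x
    obtain ⟨k, hk⟩ := x.2
    exact ⟨k, Subtype.ext (by simpa using hk)⟩
  exact ⟨monoidHomOfForallMemZpowers hgen (by rwa [Subgroup.orderOf_mk]),
    monoidHomOfForallMemZpowers_apply_gen hgen _⟩

lemma nonempty_monoidHom_zpowers_complexUnits_mulEquiv {G : Type*} [Group G] (g : G)
    (hg : IsOfFinOrder g) :
    Nonempty ((zpowers g →* ℂˣ) ≃* Multiplicative (ZMod (orderOf g))) := by
  have : Finite (zpowers g) := hg.finite_zpowers
  have : NeZero (orderOf g) := ⟨hg.orderOf_pos.ne'⟩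
  let : CommGroup (zpowers g) := IsCyclic.commGroup
  obtain ⟨e⟩ := IsCyclic.monoidHom_equiv_self (zpowers g) ℂ
  exact ⟨e.trans (mulEquivOfCyclicCardEq (by simp [Nat.card_zpowers]))⟩

namespace DihedralGroup

def sign {n : ℕ} (hn : 2 ∣ n) : DihedralGroup n →* ℤˣ where
  toFun
    | r k => (-1) ^ ZMod.castHom hn (ZMod 2) k
    | sr k => (-1) ^ ZMod.castHom hn (ZMod 2) k
  map_one' := by rw [one_def]; simp
  map_mul' := by
    rintro (i | i) (j | j) <;>
      simp only [r_mul_r, r_mul_sr, sr_mul_r, sr_mul_sr, map_add, map_sub, uzpow_add, uzpow_sub,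
        div_eq_mul_inv, Int.units_inv_eq_self, mul_comm]

lemma sign_r_one {n : ℕ} (hn : 2 ∣ n) : sign hn (r 1) = -1 := by
  change (-1 : ℤˣ) ^ ZMod.castHom hn (ZMod 2) 1 = -1
  rw [map_one, uzpow_one]

lemma map_r_eq_one {n : ℕ} [NeZero n] {M : Type*} [Monoid M] (φ : DihedralGroup n →* M)
    (h : φ (r 1) = 1) (k : ZMod n) : φ (r k) = 1 := by
  rw [← ZMod.natCast_zmod_val k, ← r_one_pow, map_pow, h, one_pow]

lemma map_sr_eq_map_sr_zero {n : ℕ} [NeZero n] {M : Type*} [Monoid M]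
    (φ : DihedralGroup n →* M) (h : φ (r 1) = 1) (k : ZMod n) : φ (sr k) = φ (sr 0) := by
  rw [← zero_add k, ← sr_mul_r, map_mul, map_r_eq_one φ h, mul_one]

end DihedralGroup

section D8

variable {φ : DihedralGroup 4 →* (RatFunc ℂ ≃ₐ[ℂ] RatFunc ℂ)}

lemma D8act_r (hρ : φ (r 1) = AlgEquiv.refl) (k : ZMod 4) (x : RatFunc ℂ) :
    D8act φ (r k) x = x := by
  rw [D8act, map_r_eq_one φ (hρ.trans AlgEquiv.aut_one.symm), AlgEquiv.one_apply]

lemma D8act_sr (hρ : φ (r 1) = AlgEquiv.refl) (k : ZMod 4) (x : RatFunc ℂ) :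
    D8act φ (sr k) x = φ (sr 0) x := by
  rw [D8act, map_sr_eq_map_sr_zero φ (hρ.trans AlgEquiv.aut_one.symm)]

lemma involutive_map_sr_zero : Function.Involutive (φ (sr 0)) := by
  intro x
  rw [← AlgEquiv.mul_apply, ← map_mul, sr_mul_self, map_one, AlgEquiv.one_apply]

lemma D8IsCocycle.of_intUnits (χ : DihedralGroup 4 →* ℤˣ) :
    D8IsCocycle φ ((Units.map (Int.castRingHom (RatFunc ℂ)).toMonoidHom).comp χ) := by
  intro g h
  simp [D8act]

namespace D8IsCocycle

variable {f : DihedralGroup 4 → (RatFunc ℂ)ˣ}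

lemma apply_one (hf : D8IsCocycle φ f) : (f 1 : RatFunc ℂ) = 1 := by
  have h := hf 1 1
  rw [mul_one, D8act, map_one, AlgEquiv.one_apply] at h
  exact (mul_eq_left₀ (Units.ne_zero _)).mp h.symm

lemma apply_r_natCast (hρ : φ (r 1) = AlgEquiv.refl) (hf : D8IsCocycle φ f) (n : ℕ) :
    (f (r n) : RatFunc ℂ) = f (r 1) ^ n := by
  induction n with
  | zero => rw [Nat.cast_zero, ← one_def, hf.apply_one, pow_zero]
  | succ n ih => rw [Nat.cast_succ, ← r_mul_r, hf, D8act_r hρ, ih, pow_succ]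

lemma apply_r (hρ : φ (r 1) = AlgEquiv.refl) (hf : D8IsCocycle φ f) (k : ZMod 4) :
    (f (r k) : RatFunc ℂ) = f (r 1) ^ k.val := by
  conv_lhs => rw [← ZMod.natCast_zmod_val k]
  exact hf.apply_r_natCast hρ k.val

lemma apply_r_one_pow_four (hρ : φ (r 1) = AlgEquiv.refl) (hf : D8IsCocycle φ f) :
    (f (r 1) : RatFunc ℂ) ^ 4 = 1 := by
  rw [← hf.apply_r_natCast hρ 4, show ((4 : ℕ) : ZMod 4) = 0 from rfl, ← one_def,
    hf.apply_one]

lemma map_sr_zero_apply_r_one (hρ : φ (r 1) = AlgEquiv.refl) (hf : D8IsCocycle φ f) :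
    φ (sr 0) (f (r 1)) = (f (r 1) : RatFunc ℂ) ^ 3 := by
  have h₁ := hf (sr 0) (r 1)
  have h₂ := hf (r 3) (sr 0)
  rw [sr_mul_r, zero_add] at h₁
  rw [r_mul_sr, show (0 : ZMod 4) - 3 = 1 from rfl, h₁, D8act_r hρ, hf.apply_r hρ 3,
    show (3 : ZMod 4).val = 3 from rfl, D8act] at h₂
  exact mul_left_cancel₀ (Units.ne_zero _) (h₂.trans (mul_comm _ _))

lemma apply_r_one_eq_one_or_neg_one (hρ : φ (r 1) = AlgEquiv.refl) (hf : D8IsCocycle φ f) :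
    (f (r 1) : RatFunc ℂ) = 1 ∨ (f (r 1) : RatFunc ℂ) = -1 :=
  eq_one_or_eq_neg_one_of_pow_four_eq_one (φ (sr 0)).toAlgHom Complex.I_sq
    (hf.apply_r_one_pow_four hρ) (hf.map_sr_zero_apply_r_one hρ)

lemma apply_sr (hρ : φ (r 1) = AlgEquiv.refl) (hf : D8IsCocycle φ f) (k : ZMod 4) :
    (f (sr k) : RatFunc ℂ) = f (sr 0) * f (r 1) ^ k.val := by
  have h := hf (sr 0) (r k)
  rw [sr_mul_r, zero_add, D8act, hf.apply_r hρ, map_pow] at h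
  rcases hf.apply_r_one_eq_one_or_neg_one hρ with ha | ha <;> simpa [ha] using h

lemma apply_sr_zero_mul_map (hf : D8IsCocycle φ f) :
    (f (sr 0) : RatFunc ℂ) * φ (sr 0) (f (sr 0)) = 1 := by
  have h := hf (sr 0) (sr 0)
  rwa [sr_mul_sr, sub_self, ← one_def, hf.apply_one, eq_comm] at h

end D8IsCocycle

lemma D8Cohomologous_iff (hρ : φ (r 1) = AlgEquiv.refl) (hσ : φ (sr 0) RatFunc.X = - RatFunc.X)
    (F F' : {f : DihedralGroup 4 → (RatFunc ℂ)ˣ // D8IsCocycle φ f}) :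
    D8Cohomologous φ F F' ↔ (F.1 (r 1) : RatFunc ℂ) = F'.1 (r 1) := by
  obtain ⟨f, hf⟩ := F
  obtain ⟨f', hf'⟩ := F'
  constructor
  · rintro ⟨β, hβ⟩
    simpa [D8act_r hρ] using hβ (r 1)
  · intro h
    set u : RatFunc ℂ := f (sr 0) * (f' (sr 0) : RatFunc ℂ)⁻¹
    have hu : u * φ (sr 0) u = 1 := by
      rw [map_mul, map_inv₀, show u * (φ (sr 0) (f (sr 0)) * (φ (sr 0) (f' (sr 0)))⁻¹) =
        f (sr 0) * φ (sr 0) (f (sr 0)) * (f' (sr 0) * φ (sr 0) (f' (sr 0)))⁻¹ by ring,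
        hf.apply_sr_zero_mul_map, hf'.apply_sr_zero_mul_map, inv_one, mul_one]
    have hX : φ (sr 0) RatFunc.X ≠ RatFunc.X := by
      rw [hσ]
      exact neg_ne_self.mpr RatFunc.X_ne_zero
    obtain ⟨β, hβ0, hβ⟩ :=
      exists_ne_zero_apply_eq_mul_of_involutive (φ (sr 0)) involutive_map_sr_zero hX hu
    refine ⟨Units.mk0 β hβ0, ?_⟩
    rintro (k | k)
    · rw [D8act_r hρ, hf.apply_r hρ k, hf'.apply_r hρ k, h, Units.mul_inv, mul_one]
    · rw [hf.apply_sr hρ k, hf'.apply_sr hρ k, h, D8act_sr hρ, Units.val_inv_eq_inv_val,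
        Units.val_mk0, hβ]
      simp only [u]
      field_simp

lemma card_quot_D8Cohomologous (hρ : φ (r 1) = AlgEquiv.refl)
    (hσ : φ (sr 0) RatFunc.X = - RatFunc.X) : Nat.card (Quot (D8Cohomologous φ)) = 2 := by
  let ev : Quot (D8Cohomologous φ) → RatFunc ℂ :=
    Quot.lift (fun F => (F.1 (r 1) : RatFunc ℂ)) fun F F' => (D8Cohomologous_iff hρ hσ F F').mp
  have hinj : Function.Injective ev := by
    rintro ⟨F⟩ ⟨F'⟩ h
    exact Quot.sound ((D8Cohomologous_iff hρ hσ F F').mpr h)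
  have hrange : Set.range ev = {1, -1} := by
    ext a
    constructor
    · rintro ⟨⟨F⟩, rfl⟩
      exact F.2.apply_r_one_eq_one_or_neg_one hρ
    · rintro (rfl | rfl)
      · exact ⟨Quot.mk _ ⟨_, D8IsCocycle.of_intUnits 1⟩, by simp [ev]⟩
      · exact ⟨Quot.mk _ ⟨_, D8IsCocycle.of_intUnits (sign (by norm_num))⟩, by
          simp [ev, sign_r_one]⟩
  rw [← Nat.card_range_of_injective hinj, hrange, Nat.card_coe_set_eq,
    Set.ncard_pair (by norm_num)]

lemma exists_character_not_restriction (hρ : φ (r 1) = AlgEquiv.refl) :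
    ∃ χ : zpowers (r 1 : DihedralGroup 4) →* (RatFunc ℂ)ˣ, ¬ ∃ f : DihedralGroup 4 → (RatFunc ℂ)ˣ,
      D8IsCocycle φ f ∧ ∀ h : zpowers (r 1), f h = χ h := by
  let i : (RatFunc ℂ)ˣ := Units.mk0 (algebraMap ℂ _ Complex.I) (by simp)
  have hi : orderOf i ∣ orderOf (r 1 : DihedralGroup 4) := by
    rw [orderOf_r_one]
    exact orderOf_dvd_of_pow_eq_one (Units.ext (by simp [i, ← map_pow]))
  obtain ⟨χ, hχ⟩ := exists_monoidHom_zpowers_apply_eq (r 1) hi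
  refine ⟨χ, fun ⟨f, hf, hres⟩ => ?_⟩
  have hfi : (f (r 1) : RatFunc ℂ) = algebraMap ℂ _ Complex.I := by
    rw [show r 1 = ((⟨r 1, mem_zpowers _⟩ : zpowers (r 1 : DihedralGroup 4)) : DihedralGroup 4)
      from rfl, hres, hχ]
    rfl
  have hsq : (f (r 1) : RatFunc ℂ) ^ 2 = 1 := by
    rcases hf.apply_r_one_eq_one_or_neg_one hρ with h | h <;> simp [h]
  rw [hfi, ← map_pow, Complex.I_sq, map_neg, map_one] at hsq
  norm_num at hsq

end D8

/-- Let `G = D₈` act on `K = ℂ(z)` through `G/H ≅ ℤ/2` (`H = ⟨ρ⟩ ≅ ℤ/4` acting trivially),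
with `σ` acting by `z ↦ -z`.  Then `H¹(G, Kˣ)` has order 2, the character group
`Hom(H, ℂˣ)` is `ℤ/4`, and the restriction map
`H¹(G, Kˣ) → H¹(H, Kˣ)^{G/H} = Hom(H, Kˣ)` is not surjective: some character of `H`
is not the restriction of any cocycle on `G`. -/
theorem D8_restriction_not_surjective
    (φ : DihedralGroup 4 →* (RatFunc ℂ ≃ₐ[ℂ] RatFunc ℂ))
    (hρ : φ (DihedralGroup.r 1) = AlgEquiv.refl)
    (hσ : φ (DihedralGroup.sr 0) RatFunc.X = - RatFunc.X) :
    Nat.card (Quot (D8Cohomologous φ)) = 2 ∧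
    Nonempty ((↥(Subgroup.zpowers (DihedralGroup.r 1 : DihedralGroup 4)) →* ℂˣ) ≃*
      Multiplicative (ZMod 4)) ∧
    ∃ χ : ↥(Subgroup.zpowers (DihedralGroup.r 1 : DihedralGroup 4)) →* (RatFunc ℂ)ˣ,
      ¬ ∃ f : DihedralGroup 4 → (RatFunc ℂ)ˣ, D8IsCocycle φ f ∧
        ∀ h : ↥(Subgroup.zpowers (DihedralGroup.r 1 : DihedralGroup 4)), f h = χ h := by
  refine ⟨card_quot_D8Cohomologous hρ hσ, ?_, exists_character_not_restriction hρ⟩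
  have h := nonempty_monoidHom_zpowers_complexUnits_mulEquiv (r 1 : DihedralGroup 4)
    (isOfFinOrder_of_finite _)
  rwa [orderOf_r_one] at h

end
end

section
/- Let k ⊆ k' ⊆ K with K a finitely generated field extension of k and k' the algebraic closure of k in K. Then the algebraic closure of k in the rational function field K(t) equals k'; in particular the degree [k' : k] is unchanged when K is replaced by K(t). -/
/-!
An element of `K(t)` integral over `k` is integral over `K`, and `K` is algebraically closed
in `K(t)`: a nonconstant rational function `f` is transcendental over `K`, because `K(t)` is
algebraic over `K(f)` while `t` is transcendental over `K`. So the element is a constant `c`,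
and `c` is integral over `k` because `K → K(t)` is injective.
-/

open Polynomial

theorem RatFunc.exists_eq_C_of_isAlgebraic {K : Type*} [Field K] {f : RatFunc K}
    (hf : IsAlgebraic K f) : ∃ c, f = C c := by
  by_contra hconst
  exact f.transcendental_of_ne_C hconst hf

theorem RatFunc.integralClosure_eq_bot (K : Type*) [Field K] :
    integralClosure K (RatFunc K) = ⊥ := by
  refine eq_bot_iff.mpr fun f hf ↦ ?_
  obtain ⟨c, rfl⟩ := RatFunc.exists_eq_C_of_isAlgebraic (IsIntegral.isAlgebraic hf)
  exact Algebra.mem_bot.mpr ⟨c, RatFunc.algebraMap_C c⟩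

theorem integralClosure_eq_map_of_integralClosure_eq_bot {k A B : Type*} [CommRing k]
    [CommRing A] [CommRing B] [Algebra k A] [Algebra A B] [Algebra k B] [IsScalarTower k A B]
    (hinj : Function.Injective (algebraMap A B)) (hA : integralClosure A B = ⊥) :
    integralClosure k B = (integralClosure k A).map (IsScalarTower.toAlgHom k A B) := by
  apply le_antisymm
  · intro x (hx : IsIntegral k x)
    have hxA : x ∈ (⊥ : Subalgebra A B) := hA ▸ hx.tower_top
    obtain ⟨a, rfl⟩ := Algebra.mem_bot.mp hxA
    exact ⟨a, (isIntegral_algebraMap_iff hinj).mp hx, rfl⟩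
  · rintro _ ⟨a, ha, rfl⟩
    exact (ha : IsIntegral k a).map (IsScalarTower.toAlgHom k A B)

theorem algebraic_closure_unchanged_in_ratfunc_general
    (k K : Type*) [Field k] [Field K] [Algebra k K]
    [IsScalarTower k K (RatFunc K)] :
    integralClosure k (RatFunc K) =
      Subalgebra.map (IsScalarTower.toAlgHom k K (RatFunc K)) (integralClosure k K) :=
  integralClosure_eq_map_of_integralClosure_eq_bot (algebraMap K (RatFunc K)).injective
    (RatFunc.integralClosure_eq_bot K)

/-- Let `K/k` be a finitely generated field extension and `k'` the algebraic closure of `k`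
in `K`.  Then the algebraic closure of `k` in the rational function field `K(t)` is again
`k'`: the integral closure of `k` in `RatFunc K` is the image of the integral closure of `k`
in `K`.  In particular `[k' : k]` is unchanged when `K` is replaced by `K(t)`. -/
theorem algebraic_closure_unchanged_in_ratfunc
    (k K : Type*) [Field k] [Field K] [Algebra k K]
    (hfg : ∃ s : Finset K, IntermediateField.adjoin k (s : Set K) = ⊤)
    [IsScalarTower k K (RatFunc K)] :
    integralClosure k (RatFunc K) =
      Subalgebra.map (IsScalarTower.toAlgHom k K (RatFunc K)) (integralClosure k K) :=
  algebraic_closure_unchanged_in_ratfunc_general k K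
end
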